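/- Let g > 0, h_l > 0, u_l > 0, b₀ > 0 be real numbers, and define H̃(h) := −c₁(h)·(η(h, u₀(h)) − η(h_l, u_l)) for h ≥ h_l. Then H̃ is nonnegative on [h̃, h̲] and strictly increasing on (h̃, h̲], where z := u_l²/(g·h_l), h̃ := h_l if z ≤ 1 and h̃ := (h_l/2)·(√(1 + 8z) − 1) if z > 1, and h̲ is the largest real root of f. -/

import Mathlib

/-- Velocity along the 1-shock curve from `(h_l, u_l)` at depth `h`. -/
noncomputable def uZero (g hl ul h : ℝ) : ℝ :=
  ul - Real.sqrt ((g / 2) * (1 / h + 1 / hl)) * (h - hl)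

/-- Speed of the 1-shock from `(h_l, u_l)` to depth `h`. -/
noncomputable def cOne (g hl ul h : ℝ) : ℝ :=
  ul - Real.sqrt ((g / 2) * (1 / h + 1 / hl)) * h

/-- Energy density `η(h,u) = hu²/2 + gh²/2 + b₀h`. -/
noncomputable def eta (g b₀ h u : ℝ) : ℝ :=
  h * u ^ 2 / 2 + g * h ^ 2 / 2 + b₀ * h

/-- The cubic `f(h) = h³ − h_l h² − (h_l² + (2/g)u_l²h_l)h + h_l³`. -/
noncomputable def fCubic (g hl ul h : ℝ) : ℝ :=
  h ^ 3 - hl * h ^ 2 - (hl ^ 2 + (2 / g) * ul ^ 2 * hl) * h + hl ^ 3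

/-- `h̃ = h_l` if `z ≤ 1` and `h̃ = (h_l/2)(√(1+8z) − 1)` if `z > 1`,
where `z = u_l²/(gh_l)`. -/
noncomputable def hTilde (g hl ul : ℝ) : ℝ :=
  if ul ^ 2 / (g * hl) ≤ 1 then hl
  else (hl / 2) * (Real.sqrt (1 + 8 * (ul ^ 2 / (g * hl))) - 1)

/-!
Write `S(h) := √((g/2)(1/h + 1/h_l))·h`, so that `−c₁ = S − u_l`. Since
`S² = g h (h + h_l)/(2 h_l)`, `S` is increasing, and `h̃` is chosen so that `S(h̃) ≥ u_l`.
Eliminating the square root from `u₀ = u_l − (S/h)(h − h_l)` gives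
`η(h, u₀(h)) − η(h_l, u_l) = (h − h_l)(c₁² + g(h + h_l)/2 + 2b₀)/2`, so for `h ≥ h̃` the energy
production is a product of nonnegative increasing factors.
-/

open Set

lemma StrictMonoOn.mul_of_nonneg {α M₀ : Type*} [Preorder α] [MulZeroClass M₀] [Preorder M₀]
    [PosMulStrictMono M₀] [MulPosMono M₀] {f g : α → M₀} {s : Set α}
    (hf : StrictMonoOn f s) (hg : StrictMonoOn g s) (hf₀ : ∀ x ∈ s, 0 ≤ f x)
    (hg₀ : ∀ x ∈ s, 0 ≤ g x) : StrictMonoOn (fun x => f x * g x) s :=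
  fun _ ha _ hb hab => mul_lt_mul'' (hf ha hb hab) (hg ha hb hab) (hf₀ _ ha) (hg₀ _ ha)

noncomputable def relShockSpeed (g hl h : ℝ) : ℝ :=
  Real.sqrt ((g / 2) * (1 / h + 1 / hl)) * h

noncomputable def energyProduction (g hl ul b₀ h : ℝ) : ℝ :=
  -(cOne g hl ul h) * (eta g b₀ h (uZero g hl ul h) - eta g b₀ hl ul)

section

variable {g hl ul b₀ h : ℝ}

lemma neg_cOne_eq (g hl ul h : ℝ) : -cOne g hl ul h = relShockSpeed g hl h - ul := by
  rw [cOne, relShockSpeed]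
  ring

lemma relShockSpeed_nonneg (hh : 0 ≤ h) : 0 ≤ relShockSpeed g hl h :=
  mul_nonneg (Real.sqrt_nonneg _) hh

lemma relShockSpeed_sq (hg : 0 ≤ g) (hhl : 0 < hl) (hh : 0 < h) :
    relShockSpeed g hl h ^ 2 = g * h * (h + hl) / (2 * hl) := by
  rw [relShockSpeed, mul_pow, Real.sq_sqrt (by positivity)]
  field_simp
  ring

lemma strictMonoOn_relShockSpeed (hg : 0 < g) (hhl : 0 < hl) :
    StrictMonoOn (relShockSpeed g hl) (Ioi 0) := by
  intro a (ha : 0 < a) b (hb : 0 < b) hab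
  rw [← pow_lt_pow_iff_left₀ (relShockSpeed_nonneg ha.le) (relShockSpeed_nonneg hb.le) two_ne_zero,
    relShockSpeed_sq hg.le hhl ha, relShockSpeed_sq hg.le hhl hb]
  gcongr

lemma hl_le_hTilde (hhl : 0 ≤ hl) : hl ≤ hTilde g hl ul := by
  rw [hTilde]
  split_ifs with hz
  · exact le_rfl
  · have h3 : 3 ≤ Real.sqrt (1 + 8 * (ul ^ 2 / (g * hl))) :=
      Real.le_sqrt_of_sq_le (by linarith)
    nlinarith

lemma hTilde_pos (hhl : 0 < hl) : 0 < hTilde g hl ul :=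
  hhl.trans_le (hl_le_hTilde hhl.le)

/- For `z ≤ 1`, `S(h_l)² = g h_l ≥ u_l²`; for `z > 1`, `h̃` is the positive root of
`g h (h + h_l) = 2 h_l u_l²`, i.e. `c₁(h̃) = 0`. -/
lemma le_relShockSpeed_hTilde (hg : 0 < g) (hhl : 0 < hl) :
    ul ≤ relShockSpeed g hl (hTilde g hl ul) := by
  have hpos : 0 < hTilde g hl ul := hTilde_pos hhl
  refine le_of_pow_le_pow_left₀ two_ne_zero (relShockSpeed_nonneg hpos.le) ?_
  rw [relShockSpeed_sq hg.le hhl hpos, hTilde]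
  split_ifs with hz
  · rw [div_le_one (by positivity)] at hz
    field_simp
    nlinarith
  · have hz_mul : ul ^ 2 / (g * hl) * (g * hl) = ul ^ 2 := div_mul_cancel₀ _ (by positivity)
    have hs := Real.sq_sqrt (by positivity : (0 : ℝ) ≤ 1 + 8 * (ul ^ 2 / (g * hl)))
    set r := Real.sqrt (1 + 8 * (ul ^ 2 / (g * hl)))
    apply le_of_eq
    field_simp
    linear_combination -(g * hl) * hs - 8 * hz_mul

lemma eta_uZero_sub_eta (hg : 0 ≤ g) (hhl : 0 < hl) (hh : 0 < h) :
    eta g b₀ h (uZero g hl ul h) - eta g b₀ hl ul =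
      (h - hl) * (cOne g hl ul h ^ 2 + g * (h + hl) / 2 + 2 * b₀) / 2 := by
  have ht : Real.sqrt ((g / 2) * (1 / h + 1 / hl)) ^ 2 * (2 * h * hl) = g * (h + hl) := by
    rw [Real.sq_sqrt (by positivity)]
    field_simp
    ring
  simp only [eta, uZero, cOne]
  linear_combination (-(h - hl) / 4) * ht

lemma energyProduction_eq (hg : 0 ≤ g) (hhl : 0 < hl) (hh : 0 < h) :
    energyProduction g hl ul b₀ h =
      (relShockSpeed g hl h - ul) *
        ((h - hl) * (((relShockSpeed g hl h - ul) ^ 2 + g * (h + hl) / 2 + 2 * b₀) / 2)) := by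
  rw [energyProduction, eta_uZero_sub_eta hg hhl hh, ← neg_sq, neg_cOne_eq]
  ring

lemma le_relShockSpeed (hg : 0 < g) (hhl : 0 < hl) (hh : hTilde g hl ul ≤ h) :
    ul ≤ relShockSpeed g hl h :=
  (le_relShockSpeed_hTilde hg hhl).trans <| (strictMonoOn_relShockSpeed hg hhl).monotoneOn
    (hTilde_pos hhl) ((hTilde_pos hhl).trans_le hh) hh

theorem energyProduction_nonneg (hg : 0 < g) (hhl : 0 < hl) (hb₀ : 0 ≤ b₀)
    (hh : hTilde g hl ul ≤ h) : 0 ≤ energyProduction g hl ul b₀ h := by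
  have hlh : hl ≤ h := (hl_le_hTilde hhl.le).trans hh
  rw [energyProduction_eq hg.le hhl (hhl.trans_le hlh)]
  have hB : 0 ≤ (relShockSpeed g hl h - ul) ^ 2 + g * (h + hl) / 2 + 2 * b₀ := by
    have : 0 ≤ g * (h + hl) := mul_nonneg hg.le (by linarith)
    positivity
  exact mul_nonneg (sub_nonneg.2 (le_relShockSpeed hg hhl hh))
    (mul_nonneg (sub_nonneg.2 hlh) (by positivity))

theorem strictMonoOn_energyProduction (hg : 0 < g) (hhl : 0 < hl) (hb₀ : 0 ≤ b₀) :
    StrictMonoOn (energyProduction g hl ul b₀) (Ioi (hTilde g hl ul)) := by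
  have hpos : ∀ h ∈ Ioi (hTilde g hl ul), 0 < h := fun h hh => (hTilde_pos hhl).trans hh
  have hdepth : ∀ h ∈ Ioi (hTilde g hl ul), 0 ≤ h - hl := fun h hh =>
    sub_nonneg.2 ((hl_le_hTilde hhl.le).trans (le_of_lt hh))
  have hspeed : ∀ h ∈ Ioi (hTilde g hl ul), 0 ≤ relShockSpeed g hl h - ul := fun h hh =>
    sub_nonneg.2 (le_relShockSpeed hg hhl (le_of_lt hh))
  have hspeed_mono : StrictMonoOn (fun h => relShockSpeed g hl h - ul) (Ioi (hTilde g hl ul)) :=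
    fun a ha b hb hab =>
      sub_lt_sub_right (strictMonoOn_relShockSpeed hg hhl (hpos a ha) (hpos b hb) hab) ul
  have hfactor_mono : StrictMonoOn
      (fun h => ((relShockSpeed g hl h - ul) ^ 2 + g * (h + hl) / 2 + 2 * b₀) / 2)
      (Ioi (hTilde g hl ul)) := fun a ha b hb hab => by
    have := pow_le_pow_left₀ (hspeed a ha) (hspeed_mono ha hb hab).le 2
    have : g * (a + hl) < g * (b + hl) := by gcongr
    linarith
  have hfactor : ∀ h ∈ Ioi (hTilde g hl ul),
      0 ≤ ((relShockSpeed g hl h - ul) ^ 2 + g * (h + hl) / 2 + 2 * b₀) / 2 := fun h hh => by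
    have : 0 ≤ g * (h + hl) := mul_nonneg hg.le (by linarith [hpos h hh])
    positivity
  refine (hspeed_mono.mul_of_nonneg ?_ hspeed fun h hh => mul_nonneg (hdepth h hh) (hfactor h hh))
    |>.congr fun h hh => (energyProduction_eq hg.le hhl (hpos h hh)).symm
  exact StrictMonoOn.mul_of_nonneg (fun a _ b _ hab => sub_lt_sub_right hab hl) hfactor_mono
    hdepth hfactor

end

theorem stmt_18_general (g hl ul b₀ hunder : ℝ) (hg : 0 < g) (hhl : 0 < hl)
    (hb₀ : 0 < b₀) :
    (∀ h ∈ Set.Icc (hTilde g hl ul) hunder,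
      0 ≤ -(cOne g hl ul h) * (eta g b₀ h (uZero g hl ul h) - eta g b₀ hl ul)) ∧
    StrictMonoOn
      (fun h : ℝ => -(cOne g hl ul h) * (eta g b₀ h (uZero g hl ul h) - eta g b₀ hl ul))
      (Set.Ioc (hTilde g hl ul) hunder) :=
  ⟨fun _ hh => energyProduction_nonneg hg hhl hb₀.le hh.1,
    (strictMonoOn_energyProduction hg hhl hb₀.le).mono Ioc_subset_Ioi_self⟩

/-- The local energy production `H̃(h) = −c₁(h)(η(h,u₀(h)) − η(h_l,u_l))` of the
left-going 1-shock is nonnegative on `[h̃, h̲]` and strictly increasing on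
`(h̃, h̲]`, `h̲` being the largest real root of `f`. -/
theorem stmt_18 (g hl ul b₀ hunder : ℝ) (hg : 0 < g) (hhl : 0 < hl) (hul : 0 < ul)
    (hb₀ : 0 < b₀)
    (hroot : fCubic g hl ul hunder = 0)
    (hmax : ∀ x : ℝ, fCubic g hl ul x = 0 → x ≤ hunder) :
    (∀ h ∈ Set.Icc (hTilde g hl ul) hunder,
      0 ≤ -(cOne g hl ul h) * (eta g b₀ h (uZero g hl ul h) - eta g b₀ hl ul)) ∧
    StrictMonoOn
      (fun h : ℝ => -(cOne g hl ul h) * (eta g b₀ h (uZero g hl ul h) - eta g b₀ hl ul))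
      (Set.Ioc (hTilde g hl ul) hunder) :=
  stmt_18_general g hl ul b₀ hunder hg hhl hb₀
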